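/- arXiv:2112.02062 — 4 statements merged into one kernel-verified Lean document; each statement's English description precedes it below -/
import Mathlib

section
/- Let Σ, Σ' be pure-dimensional rational polyhedral fans of dimensions d, d' in lattices N, N', with weight functions ω : Σ_d → ℤ_{>0} and ω' : Σ'_{d'} → ℤ_{>0} each satisfying the balancing condition. Then the product fan Σ × Σ' in N × N' with weight (ω × ω')(σ × σ') = ω(σ)ω(σ') also satisfies the balancing condition. -/
/-- The product of two balanced weighted fans is balanced.

Formalized combinatorially: the fan `Σ` in the lattice `N` is recorded by its
top-dimensional cones `T` and codimension-one cones `C`, the adjacency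
`adj τ ⊆ T` of top cones containing `τ`, the sublattices `spanT σ = N_σ`,
`spanC τ = N_τ` spanned by the cones, and chosen lattice points
`nst σ τ = n_{σ,τ}` (in the relative interior of `σ`, generating `N_σ/N_τ`);
similarly for `Σ'` in `N'`.  Balancing at `τ` means
`∑_{σ ⊇ τ} ω(σ)·n_{σ,τ} ∈ N_τ`.  The codimension-one cones of `Σ × Σ'` are of
the form `σ × τ'` or `τ × σ'`; for them one may take
`n_{σ×σ', σ×τ'} = (v σ, n_{σ',τ'})` and `n_{σ×σ', τ×σ'} = (n_{σ,τ}, v' σ')`,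
where `v σ ∈ N_σ` and `v' σ' ∈ N_{σ'}` are lattice points in the relative
interiors.  Conclusion: the product weight `(ω × ω')(σ × σ') = ω(σ)·ω'(σ')`
satisfies the balancing condition at every codimension-one cone of `Σ × Σ'`. -/
theorem stmt5
    (N N' : Type) [AddCommGroup N] [AddCommGroup N']
    (T C : Type) (adj : C → Finset T)
    (spanT : T → AddSubgroup N) (spanC : C → AddSubgroup N)
    (nst : T → C → N)
    (ω : T → ℤ) (hω : ∀ σ, 0 < ω σ)
    (T' C' : Type) (adj' : C' → Finset T')
    (spanT' : T' → AddSubgroup N') (spanC' : C' → AddSubgroup N')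
    (nst' : T' → C' → N')
    (ω' : T' → ℤ) (hω' : ∀ σ', 0 < ω' σ')
    (hbal : ∀ τ, (∑ σ ∈ adj τ, ω σ • nst σ τ) ∈ spanC τ)
    (hbal' : ∀ τ', (∑ σ' ∈ adj' τ', ω' σ' • nst' σ' τ') ∈ spanC' τ')
    (v : T → N) (hv : ∀ σ, v σ ∈ spanT σ)
    (v' : T' → N') (hv' : ∀ σ', v' σ' ∈ spanT' σ') :
    (∀ (σ : T) (τ' : C'),
      (∑ σ' ∈ adj' τ', (ω σ * ω' σ') • ((v σ, nst' σ' τ') : N × N'))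
        ∈ (spanT σ).prod (spanC' τ')) ∧
    (∀ (τ : C) (σ' : T'),
      (∑ σ ∈ adj τ, (ω σ * ω' σ') • ((nst σ τ, v' σ') : N × N'))
        ∈ (spanC τ).prod (spanT' σ')) := by
  have key : ∀ {A B : Type} [AddCommGroup A] [AddCommGroup B] (I : Type) (s : Finset I)
      (f : I → A × B) (H : AddSubgroup A) (K : AddSubgroup B),
      (∑ i ∈ s, (f i).1) ∈ H → (∑ i ∈ s, (f i).2) ∈ K → (∑ i ∈ s, f i) ∈ H.prod K := by
    intro A B _ _ I s f H K h1 h2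
    refine AddSubgroup.mem_prod.mpr ⟨?_, ?_⟩
    · rw [Prod.fst_sum]; exact h1
    · rw [Prod.snd_sum]; exact h2
  constructor
  · intro σ τ'
    refine key _ _ _ _ _ ?_ ?_
    · simp only [Prod.smul_fst]
      rw [← Finset.sum_smul]
      exact AddSubgroup.zsmul_mem _ (hv σ) _
    · simp only [Prod.smul_snd]
      have : (∑ σ' ∈ adj' τ', (ω σ * ω' σ') • nst' σ' τ')
          = ω σ • ∑ σ' ∈ adj' τ', ω' σ' • nst' σ' τ' := by
        rw [Finset.smul_sum]
        exact Finset.sum_congr rfl fun x _ => mul_smul _ _ _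
      rw [this]
      exact AddSubgroup.zsmul_mem _ (hbal' τ') _
  · intro τ σ'
    refine key _ _ _ _ _ ?_ ?_
    · simp only [Prod.smul_fst]
      have : (∑ σ ∈ adj τ, (ω σ * ω' σ') • nst σ τ)
          = ω' σ' • ∑ σ ∈ adj τ, ω σ • nst σ τ := by
        rw [Finset.smul_sum]
        refine Finset.sum_congr rfl fun x _ => ?_
        rw [mul_comm, mul_smul]
      rw [this]
      exact AddSubgroup.zsmul_mem _ (hbal τ) _
    · simp only [Prod.smul_snd]
      rw [← Finset.sum_smul]
      exact AddSubgroup.zsmul_mem _ (hv' σ') _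
end

section
/- Two tropical fans Σ and Σ' are both irreducible if and only if the product tropical fan Σ × Σ' is irreducible. -/
/-- Minkowski weights (see stmt 6): `η : T → ℤ` with
`∑_{σ ⊇ τ} η(σ)·n_{σ,τ} ∈ N_τ` for every codimension-one cone `τ`. -/
def MinkowskiWeights {N : Type} [AddCommGroup N]
    {T C : Type} (adj : C → Finset T) (spanC : C → AddSubgroup N)
    (nst : T → C → N) : AddSubgroup (T → ℤ) where
  carrier := {η | ∀ τ, (∑ σ ∈ adj τ, η σ • nst σ τ) ∈ spanC τ}
  add_mem' := by
    intro a b ha hb τ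
    have h := (spanC τ).add_mem (ha τ) (hb τ)
    rw [← Finset.sum_add_distrib] at h
    convert h using 2 with σ
    exact add_zsmul _ _ _
  zero_mem' := by
    intro τ
    simp [AddSubgroup.zero_mem]
  neg_mem' := by
    intro a ha τ
    have h := (spanC τ).neg_mem (ha τ)
    rw [← Finset.sum_neg_distrib] at h
    convert h using 2 with σ
    exact neg_zsmul _ _

lemma mem_MW {N : Type} [AddCommGroup N]
    {T C : Type} (adj : C → Finset T) (spanC : C → AddSubgroup N)
    (nst : T → C → N) (η : T → ℤ) :
    η ∈ MinkowskiWeights adj spanC nst ↔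
      ∀ τ, (∑ σ ∈ adj τ, η σ • nst σ τ) ∈ spanC τ := Iff.rfl

/-- Two tropical fans `Σ` and `Σ'` are both irreducible if and only if the
product tropical fan `Σ × Σ'` is irreducible.

Fans are recorded combinatorially as in stmt 5/6: top cones `T` (resp. `T'`),
codimension-one cones `C` (resp. `C'`), adjacency, cone sublattices, chosen
lattice points `n_{σ,τ}`, and positive balanced weights `ω`, `ω'`.  For the
product fan, the codimension-one cones are `σ × τ'` and `τ × σ'`, with lattice
points `(v σ, n_{σ',τ'})` resp. `(n_{σ,τ}, v' σ')`, where `v σ ∈ N_σ`,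
`v' σ' ∈ N_{σ'}` are relative-interior lattice points.  Irreducibility of a fan
means: there is no nonzero nonnegative Minkowski weight vanishing on some
top-dimensional cone (no same-dimensional tropical fan with support strictly
contained in the given support). -/
theorem stmt7
    (N N' : Type) [AddCommGroup N] [AddCommGroup N']
    (T C T' C' : Type) [Fintype T] [Fintype T'] [Nonempty T] [Nonempty T']
    (adj : C → Finset T) (spanT : T → AddSubgroup N) (spanC : C → AddSubgroup N)
    (nst : T → C → N) (ω : T → ℤ) (hωpos : ∀ σ, 0 < ω σ)
    (hωbal : ω ∈ MinkowskiWeights adj spanC nst)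
    (adj' : C' → Finset T') (spanT' : T' → AddSubgroup N')
    (spanC' : C' → AddSubgroup N')
    (nst' : T' → C' → N') (ω' : T' → ℤ) (hω'pos : ∀ σ', 0 < ω' σ')
    (hω'bal : ω' ∈ MinkowskiWeights adj' spanC' nst')
    (v : T → N) (hv : ∀ σ, v σ ∈ spanT σ)
    (v' : T' → N') (hv' : ∀ σ', v' σ' ∈ spanT' σ') :
    ((¬ ∃ η ∈ MinkowskiWeights adj spanC nst,
        (∀ σ, 0 ≤ η σ) ∧ η ≠ 0 ∧ ∃ σ, η σ = 0) ∧
     (¬ ∃ η' ∈ MinkowskiWeights adj' spanC' nst',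
        (∀ σ', 0 ≤ η' σ') ∧ η' ≠ 0 ∧ ∃ σ', η' σ' = 0))
    ↔
    (¬ ∃ ηp ∈ MinkowskiWeights
        (Sum.elim (fun p : T × C' => ({p.1} : Finset T) ×ˢ adj' p.2)
                  (fun p : C × T' => adj p.1 ×ˢ ({p.2} : Finset T')))
        (Sum.elim (fun p : T × C' => (spanT p.1).prod (spanC' p.2))
                  (fun p : C × T' => (spanC p.1).prod (spanT' p.2)))
        (fun ρ : T × T' =>
          Sum.elim (fun p : T × C' => ((v ρ.1, nst' ρ.2 p.2) : N × N'))
                   (fun p : C × T' => ((nst ρ.1 p.1, v' ρ.2) : N × N'))),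
        (∀ ρ, 0 ≤ ηp ρ) ∧ ηp ≠ 0 ∧ ∃ ρ, ηp ρ = 0) := by
  constructor
  · rintro ⟨hA, hB⟩ ⟨ηp, hmem, hpos, hne, ⟨σ₀, σ'₀⟩, hz⟩
    rw [mem_MW] at hmem
    have row : ∀ σ, (fun σ' => ηp (σ, σ')) ∈ MinkowskiWeights adj' spanC' nst' := by
      intro σ
      rw [mem_MW]
      intro τ'
      have h := hmem (Sum.inl (σ, τ'))
      simp only [Sum.elim_inl, Finset.singleton_product, Finset.sum_map,
        Function.Embedding.coeFn_mk, Prod.smul_mk] at h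
      have h2 := (AddSubgroup.mem_prod.mp h).2
      simpa [Prod.snd_sum] using h2
    have col : ∀ σ', (fun σ => ηp (σ, σ')) ∈ MinkowskiWeights adj spanC nst := by
      intro σ'
      rw [mem_MW]
      intro τ
      have h := hmem (Sum.inr (τ, σ'))
      simp only [Sum.elim_inr, Finset.product_singleton, Finset.sum_map,
        Function.Embedding.coeFn_mk, Prod.smul_mk] at h
      have h1 := (AddSubgroup.mem_prod.mp h).1
      simpa [Prod.fst_sum] using h1
    have hrow0 : ∀ σ', ηp (σ₀, σ') = 0 := by
      have h0 : (fun σ' => ηp (σ₀, σ')) = 0 := by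
        by_contra h
        exact hB ⟨_, row σ₀, fun σ' => hpos _, h, σ'₀, hz⟩
      exact fun σ' => congrFun h0 σ'
    have hall : ∀ σ' σ, ηp (σ, σ') = 0 := by
      intro σ'
      have h0 : (fun σ => ηp (σ, σ')) = 0 := by
        by_contra h
        exact hA ⟨_, col σ', fun σ => hpos _, h, σ₀, hrow0 σ'⟩
      exact fun σ => congrFun h0 σ
    exact hne (funext fun ρ => hall ρ.2 ρ.1)
  · intro hP
    constructor
    · rintro ⟨η, hmem, hpos, hne, σ₀, hz⟩
      rw [mem_MW] at hmem
      obtain ⟨σ'₁⟩ := (inferInstance : Nonempty T')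
      refine hP ⟨fun ρ => η ρ.1 * ω' ρ.2, ?_,
        fun ρ => mul_nonneg (hpos _) (hω'pos _).le, ?_, (σ₀, σ'₁), by simp [hz]⟩
      · rw [mem_MW]
        intro τ
        rcases τ with ⟨σ, τ'⟩ | ⟨τ, σ'⟩
        · simp only [Sum.elim_inl, Finset.singleton_product, Finset.sum_map,
            Function.Embedding.coeFn_mk, Prod.smul_mk]
          rw [AddSubgroup.mem_prod]
          constructor
          · rw [Prod.fst_sum]
            simp only
            rw [← Finset.sum_smul]
            exact AddSubgroup.zsmul_mem _ (hv σ) _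
          · rw [Prod.snd_sum]
            simp only [mul_zsmul]
            rw [← Finset.smul_sum]
            exact AddSubgroup.zsmul_mem _ (hω'bal τ') _
        · simp only [Sum.elim_inr, Finset.product_singleton, Finset.sum_map,
            Function.Embedding.coeFn_mk, Prod.smul_mk]
          rw [AddSubgroup.mem_prod]
          constructor
          · rw [Prod.fst_sum]
            simp only [show ∀ a : T, η a * ω' σ' = ω' σ' * η a from fun a => mul_comm _ _,
              mul_zsmul]
            rw [← Finset.smul_sum]
            exact AddSubgroup.zsmul_mem _ (hmem τ) _
          · rw [Prod.snd_sum]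
            simp only
            rw [← Finset.sum_smul]
            exact AddSubgroup.zsmul_mem _ (hv' σ') _
      · obtain ⟨σ₁, hσ₁⟩ := Function.ne_iff.mp hne
        intro h
        have h0 : η σ₁ * ω' σ'₁ = 0 := congrFun h (σ₁, σ'₁)
        rcases mul_eq_zero.mp h0 with h1 | h2
        · exact hσ₁ h1
        · exact (hω'pos σ'₁).ne' h2
    · rintro ⟨η', hmem', hpos', hne', σ'₀, hz'⟩
      rw [mem_MW] at hmem'
      obtain ⟨σ₁⟩ := (inferInstance : Nonempty T)
      refine hP ⟨fun ρ => ω ρ.1 * η' ρ.2, ?_,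
        fun ρ => mul_nonneg (hωpos _).le (hpos' _), ?_, (σ₁, σ'₀), by simp [hz']⟩
      · rw [mem_MW]
        intro τ
        rcases τ with ⟨σ, τ'⟩ | ⟨τ, σ'⟩
        · simp only [Sum.elim_inl, Finset.singleton_product, Finset.sum_map,
            Function.Embedding.coeFn_mk, Prod.smul_mk]
          rw [AddSubgroup.mem_prod]
          constructor
          · rw [Prod.fst_sum]
            simp only
            rw [← Finset.sum_smul]
            exact AddSubgroup.zsmul_mem _ (hv σ) _
          · rw [Prod.snd_sum]
            simp only [mul_zsmul]
            rw [← Finset.smul_sum]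
            exact AddSubgroup.zsmul_mem _ (hmem' τ') _
        · simp only [Sum.elim_inr, Finset.product_singleton, Finset.sum_map,
            Function.Embedding.coeFn_mk, Prod.smul_mk]
          rw [AddSubgroup.mem_prod]
          constructor
          · rw [Prod.fst_sum]
            simp only [show ∀ a : T, ω a * η' σ' = η' σ' * ω a from fun a => mul_comm _ _,
              mul_zsmul]
            rw [← Finset.smul_sum]
            exact AddSubgroup.zsmul_mem _ (hωbal τ) _
          · rw [Prod.snd_sum]
            simp only
            rw [← Finset.sum_smul]
            exact AddSubgroup.zsmul_mem _ (hv' σ') _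
      · obtain ⟨σ'₂, hσ'₂⟩ := Function.ne_iff.mp hne'
        intro h
        have h0 : ω σ₁ * η' σ'₂ = 0 := congrFun h (σ₁, σ'₂)
        rcases mul_eq_zero.mp h0 with h1 | h2
        · exact (hωpos σ₁).ne' h1
        · exact hσ'₂ h2
end

section
/- Let p : 𝑇𝑀_φ(Σ) → Σ be the tropical modification of a tropical fan Σ along a piecewise integral linear function φ with divisor Δ = div(φ). Then the pushforward map p_* : M_k(𝑇𝑀_φ(Σ)) → M_k(Σ) on groups of k-dimensional Minkowski weights is injective for all k. -/
/-- The pushforward `p_* : M_k(𝑇𝑀_φ(Σ)) → M_k(Σ)` along a tropical modification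
is injective.

Formalized combinatorially: `S` indexes the `k`-dimensional cones `σ` of `Σ`
(equivalently the graph cones `σ̃` of the modification), and `D` indexes the
`(k-1)`-dimensional cones `τ` of the divisor `Δ = div(φ)` (equivalently the new
cones `τ_≥`).  The `k`-dimensional cones of `𝑇𝑀_φ(Σ)` are `S ⊕ D`.  For `τ ∈ D`,
`adj τ` is the set of `k`-cones of `Σ` containing `τ`; the `k`-cones of the
modification containing `τ̃` are the `σ̃` for `σ ∈ adj τ` together with `τ_≥`.
`Ntil τ = N_{τ̃}` is the lattice of `τ̃`, `nst σ τ = n_{σ̃,τ̃}`, and `nup τ =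
n_{τ_≥,τ̃}`, whose image generates the quotient by `N_{τ̃}` (in particular no
nonzero multiple of it lies in `N_{τ̃}`: hypothesis `hgen`).  A `k`-dimensional
Minkowski weight `w` on the modification in particular satisfies the balancing
condition at each `τ̃`, and the pushforward is `(p_* w)(σ) = w(σ̃)`; the claim is
that `w ↦ p_* w` is injective on such weights. -/
theorem stmt8
    (Ntil : Type) [AddCommGroup Ntil]
    (S D : Type) (adj : D → Finset S)
    (Nt : D → AddSubgroup Ntil)
    (nst : S → D → Ntil) (nup : D → Ntil)
    (hgen : ∀ (τ : D) (m : ℤ), m • nup τ ∈ Nt τ → m = 0) :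
    Function.Injective
      (fun w : {w : S ⊕ D → ℤ //
          ∀ τ : D, (∑ σ ∈ adj τ, w (Sum.inl σ) • nst σ τ)
            + w (Sum.inr τ) • nup τ ∈ Nt τ} =>
        (fun σ : S => w.1 (Sum.inl σ))) := by
  intro w v h
  have hS : ∀ σ : S, w.1 (Sum.inl σ) = v.1 (Sum.inl σ) := fun σ => congrFun h σ
  have hD : ∀ τ : D, w.1 (Sum.inr τ) = v.1 (Sum.inr τ) := by
    intro τ
    have hw := w.2 τ
    have hv := v.2 τ
    have hsum : (∑ σ ∈ adj τ, w.1 (Sum.inl σ) • nst σ τ)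
        = ∑ σ ∈ adj τ, v.1 (Sum.inl σ) • nst σ τ := by
      refine Finset.sum_congr rfl fun σ _ => by rw [hS σ]
    have hmem : (w.1 (Sum.inr τ) - v.1 (Sum.inr τ)) • nup τ ∈ Nt τ := by
      have := (Nt τ).sub_mem hw hv
      rw [hsum] at this
      have h2 : (∑ σ ∈ adj τ, v.1 (Sum.inl σ) • nst σ τ) + w.1 (Sum.inr τ) • nup τ -
          ((∑ σ ∈ adj τ, v.1 (Sum.inl σ) • nst σ τ) + v.1 (Sum.inr τ) • nup τ)
          = (w.1 (Sum.inr τ) - v.1 (Sum.inr τ)) • nup τ := by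
        rw [sub_smul]; abel
      rwa [h2] at this
    have := hgen τ _ hmem
    omega
  apply Subtype.ext
  funext x
  cases x with
  | inl σ => exact hS σ
  | inr τ => exact hD τ
end

section
/- Any tropical modification of an irreducible tropical fan is irreducible. -/
lemma aux_int_iso {G : Type} [AddCommGroup G] (f : G →+ ℤ) (hf : Function.Injective f)
    (x : G) (hx : x ≠ 0) : Nonempty (G ≃+ ℤ) := by
  obtain ⟨g, hg⟩ := Int.subgroup_cyclic f.range
  have hgz : g ≠ 0 := by
    rintro rfl
    have hmem : f x ∈ f.range := ⟨x, rfl⟩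
    rw [hg, AddSubgroup.mem_closure_singleton] at hmem
    obtain ⟨n, hn⟩ := hmem
    simp only [smul_zero] at hn
    exact hx (hf (by simp [← hn]))
  have hmem : ∀ n : ℤ, n • g ∈ f.range := by
    intro n; rw [hg, AddSubgroup.mem_closure_singleton]; exact ⟨n, rfl⟩
  let e : ℤ →+ f.range :=
    { toFun := fun n => ⟨n • g, hmem n⟩
      map_zero' := by simp
      map_add' := by intro a b; ext; simp [add_zsmul, add_mul] }
  have hebij : Function.Bijective e := by
    constructor
    · intro a b hab
      have h : a * g = b * g := by simpa [e, smul_eq_mul] using congrArg Subtype.val hab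
      exact mul_right_cancel₀ hgz h
    · rintro ⟨y, hy⟩
      rw [hg, AddSubgroup.mem_closure_singleton] at hy
      obtain ⟨n, hn⟩ := hy
      exact ⟨n, Subtype.ext hn⟩
  have hfr : Function.Bijective f.rangeRestrict :=
    ⟨fun a b h => hf (congrArg Subtype.val h), f.rangeRestrict_surjective⟩
  exact ⟨(AddEquiv.ofBijective f.rangeRestrict hfr).trans (AddEquiv.ofBijective e hebij).symm⟩


/-- Any tropical modification of an irreducible tropical fan is irreducible.

Combinatorial formalization: the fan `Σ` of dimension `d` in the lattice `N` has
top cones `S`, codimension-one cones `C`, adjacency `adj`, cone lattices `Nc`,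
lattice points `nst σ τ = n_{σ,τ}`, and positive balanced weight `ω`, so
irreducibility of `Σ` reads `M_d(Σ) ≅ ℤ`.  The modification `Σ̃ = 𝑇𝑀_φ(Σ)` lives
in `Ñ` with projection `π : Ñ → N`; its top cones are the graph cones `σ̃`
(`σ ∈ S`) and the new cones `τ_≥` for the divisor cones `τ` (`isΔ τ`), its
relevant codimension-one cones are the graph cones `τ̃` (`τ ∈ C`), with lattices
`Ntc τ = N_{τ̃}` and lattice points `ntil σ τ = n_{σ̃,τ̃}`, `nup τ = n_{τ_≥,τ̃}`.
The compatibilities `π(n_{σ̃,τ̃}) = n_{σ,τ}`, `π(n_{τ_≥,τ̃}) = 0`,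
`π(N_{τ̃}) ⊆ N_τ` hold, no nonzero multiple of `n_{τ_≥,τ̃}` lies in `N_{τ̃}`,
and the modified weight `ω̃` (equal to `ω` on graph cones and positive on the
new cones) is balanced.  Conclusion: `M_d(Σ) ≅ ℤ` implies `M_d(Σ̃) ≅ ℤ`. -/
theorem stmt9
    (N Ntil : Type) [AddCommGroup N] [AddCommGroup Ntil]
    (S C : Type) [DecidableEq S] [DecidableEq C] [Nonempty S]
    (adj : C → Finset S) (Nc : C → AddSubgroup N) (nst : S → C → N)
    (ω : S → ℤ) (hωpos : ∀ σ, 0 < ω σ)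
    (hωbal : ω ∈ MinkowskiWeights adj Nc nst)
    (π : Ntil →+ N) (isΔ : C → Prop) [DecidablePred isΔ]
    (Ntc : C → AddSubgroup Ntil) (ntil : S → C → Ntil) (nup : C → Ntil)
    (hπn : ∀ σ τ, π (ntil σ τ) = nst σ τ)
    (hπup : ∀ τ, π (nup τ) = 0)
    (hπNc : ∀ τ, (Ntc τ).map π ≤ Nc τ)
    (hgen : ∀ (τ : C), isΔ τ → ∀ m : ℤ, m • nup τ ∈ Ntc τ → m = 0)
    (wt : {τ : C // isΔ τ} → ℤ) (hwtpos : ∀ τ, 0 < wt τ)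
    (homega_til_bal : (Sum.elim ω wt : S ⊕ {τ : C // isΔ τ} → ℤ) ∈
      MinkowskiWeights
        (fun τ : C => (adj τ).image Sum.inl ∪
          (if h : isΔ τ then ({Sum.inr ⟨τ, h⟩} : Finset (S ⊕ {τ : C // isΔ τ})) else ∅))
        Ntc
        (Sum.elim ntil (fun _ τ => nup τ))) :
    Nonempty ((MinkowskiWeights adj Nc nst) ≃+ ℤ) →
    Nonempty ((MinkowskiWeights
        (fun τ : C => (adj τ).image Sum.inl ∪
          (if h : isΔ τ then ({Sum.inr ⟨τ, h⟩} : Finset (S ⊕ {τ : C // isΔ τ})) else ∅))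
        Ntc
        (Sum.elim ntil (fun _ τ => nup τ))) ≃+ ℤ) := by
  rintro ⟨e⟩
  set T := S ⊕ {τ : C // isΔ τ} with hT
  set bigadj : C → Finset T := fun τ => (adj τ).image Sum.inl ∪
      (if h : isΔ τ then ({Sum.inr ⟨τ, h⟩} : Finset T) else ∅) with hbigadj
  set bignst : T → C → Ntil := Sum.elim ntil (fun _ τ => nup τ) with hbignst
  -- split the big sum
  have hsplit : ∀ (η : T → ℤ) (τ : C),
      (∑ σ ∈ bigadj τ, η σ • bignst σ τ) =
      (∑ σ ∈ adj τ, η (Sum.inl σ) • ntil σ τ) +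
      (if h : isΔ τ then η (Sum.inr ⟨τ, h⟩) • nup τ else 0) := by
    intro η τ
    rw [hbigadj]
    rw [Finset.sum_union]
    · congr 1
      · rw [Finset.sum_image (fun a _ b _ h => Sum.inl_injective h)]
        simp [hbignst]
      · by_cases h : isΔ τ <;> simp [h, hbignst]
    · by_cases h : isΔ τ <;> simp [h, Finset.disjoint_left]
  -- pushforward is well defined
  have hwd : ∀ η ∈ MinkowskiWeights bigadj Ntc bignst,
      (fun σ => η (Sum.inl σ)) ∈ MinkowskiWeights adj Nc nst := by
    intro η hη τ
    have h1 := hη τ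
    have h2 : π (∑ σ ∈ bigadj τ, η σ • bignst σ τ) ∈ Nc τ :=
      hπNc τ ⟨_, h1, rfl⟩
    rw [hsplit η τ] at h2
    rw [map_add, map_sum] at h2
    simp only [map_zsmul, hπn] at h2
    have h3 : π (if h : isΔ τ then η (Sum.inr ⟨τ, h⟩) • nup τ else 0) = 0 := by
      by_cases h : isΔ τ <;> simp [h, hπup]
    rw [h3, add_zero] at h2
    exact h2
  -- the pushforward hom
  let p : (MinkowskiWeights bigadj Ntc bignst) →+ (MinkowskiWeights adj Nc nst) :=
    { toFun := fun η => ⟨fun σ => η.1 (Sum.inl σ), hwd η.1 η.2⟩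
      map_zero' := rfl
      map_add' := fun _ _ => rfl }
  -- injectivity
  have hpinj : Function.Injective p := by
    intro η η' h
    have h0 : ∀ σ : S, (η.1 - η'.1) (Sum.inl σ) = 0 := by
      intro σ
      have := congrArg (fun x => x.1 σ) h
      simpa [p, sub_eq_zero] using this
    have hd : (η.1 - η'.1) ∈ MinkowskiWeights bigadj Ntc bignst :=
      (MinkowskiWeights bigadj Ntc bignst).sub_mem η.2 η'.2
    ext x
    rw [← sub_eq_zero]
    cases x with
    | inl σ => exact h0 σ
    | inr τd =>
      obtain ⟨τ, hτ⟩ := τd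
      have hb := hd τ
      rw [hsplit _ τ] at hb
      have hz : (∑ σ ∈ adj τ, (η.1 - η'.1) (Sum.inl σ) • ntil σ τ) = 0 := by
        apply Finset.sum_eq_zero
        intro σ _
        rw [h0 σ, zero_smul]
      rw [hz, zero_add, dif_pos hτ] at hb
      exact hgen τ hτ _ hb
  -- conclude
  have hfinj : Function.Injective (e.toAddMonoidHom.comp p) :=
    e.injective.comp hpinj
  refine aux_int_iso (e.toAddMonoidHom.comp p) hfinj
    ⟨Sum.elim ω wt, homega_til_bal⟩ ?_
  intro h
  obtain ⟨σ⟩ := ‹Nonempty S›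
  have := congrArg (fun x => x.1 (Sum.inl σ)) h
  simp at this
  exact absurd this (hωpos σ).ne'
end
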